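/- arXiv:2408.09334 — 2 statements merged into one kernel-verified Lean document; each statement's English description precedes it below -/
import Mathlib

section
/- Let q = p^m with p prime and let 0 ≤ s < m. Let C_1,…,C_l ⊆ F_q^n be linear codes over F_q and let A be a nonsingular l×l matrix over F_q such that A·(A^{(p^{m-s})})^T = diag(λ_1,…,λ_l) with λ_1,…,λ_l all nonzero elements of F_q. Then the s-Galois hull of the matrix-product code C = [C_1,…,C_l]A satisfies Hull_s(C) = [Hull_s(C_1),…,Hull_s(C_l)]A. -/
open Finset Matrix

noncomputable section

/-- The Hamming weight of a vector: the number of nonzero coordinates. -/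
def hwt {G : Type*} [Zero G] {κ : Type*} (x : κ → G) : ℕ := Set.ncard {i | x i ≠ 0}

/-- The linear code `C` has minimum Hamming weight `d`. -/
def minHWt {F : Type*} [Field F] {κ : Type*} (C : Submodule F (κ → F)) (d : ℕ) : Prop :=
  (∃ c ∈ C, c ≠ 0 ∧ hwt c = d) ∧ ∀ c ∈ C, c ≠ 0 → d ≤ hwt c

/-- The minimum Hamming weight (minimum distance) of a linear code. -/
def minDist {F : Type*} [Field F] {κ : Type*} (C : Submodule F (κ → F)) : ℕ :=
  sInf (hwt '' {c | c ∈ C ∧ c ≠ 0})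

/-- The Euclidean dual of a linear code. -/
def euclDual {F : Type*} [Field F] {ι : Type*} [Fintype ι] (C : Submodule F (ι → F)) :
    Submodule F (ι → F) where
  carrier := {x | ∀ c ∈ C, ∑ i, c i * x i = 0}
  add_mem' := by
    intro a b ha hb c hc
    simp only [Set.mem_setOf_eq] at *
    simp [Pi.add_apply, mul_add, Finset.sum_add_distrib, ha c hc, hb c hc]
  zero_mem' := by intro c hc; simp
  smul_mem' := by
    intro r a ha c hc
    simp only [Set.mem_setOf_eq] at *
    simp [Pi.smul_apply, smul_eq_mul, mul_left_comm, ← Finset.mul_sum, ha c hc]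

/-- The `s`-Galois dual of a linear code over a field of characteristic `p`:
`{x | ∀ c ∈ C, ∑ i, c i * (x i)^(p^s) = 0}`. -/
def sGaloisDual {F : Type*} [Field F] {ι : Type*} [Fintype ι]
    (p s : ℕ) [Fact p.Prime] [CharP F p] (C : Submodule F (ι → F)) :
    Submodule F (ι → F) where
  carrier := {x | ∀ c ∈ C, ∑ i, c i * x i ^ p ^ s = 0}
  add_mem' := by
    intro a b ha hb c hc
    simp only [Set.mem_setOf_eq] at *
    have h : ∀ i, ((a + b) i) ^ p ^ s = a i ^ p ^ s + b i ^ p ^ s := fun i => by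
      simpa using add_pow_char_pow (a i) (b i) p s
    calc ∑ i, c i * ((a + b) i) ^ p ^ s
        = ∑ i, (c i * a i ^ p ^ s + c i * b i ^ p ^ s) :=
          Finset.sum_congr rfl fun i _ => by rw [h i, mul_add]
      _ = 0 := by rw [Finset.sum_add_distrib, ha c hc, hb c hc, add_zero]
  zero_mem' := by
    intro c hc
    have hps : p ^ s ≠ 0 := pow_ne_zero _ (Nat.Prime.ne_zero Fact.out)
    simp [zero_pow hps]
  smul_mem' := by
    intro r a ha c hc
    simp only [Set.mem_setOf_eq] at *
    have h : ∀ i, ((r • a) i) ^ p ^ s = r ^ p ^ s * a i ^ p ^ s := fun i => by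
      simp [mul_pow]
    calc ∑ i, c i * ((r • a) i) ^ p ^ s
        = ∑ i, r ^ p ^ s * (c i * a i ^ p ^ s) :=
          Finset.sum_congr rfl fun i _ => by rw [h i]; ring
      _ = 0 := by rw [← Finset.mul_sum, ha c hc, mul_zero]

/-- The `s`-Galois hull of a linear code: `Hull_s(C) = C ∩ C^{⊥_s}`. -/
def sGaloisHull {F : Type*} [Field F] {ι : Type*} [Fintype ι]
    (p s : ℕ) [Fact p.Prime] [CharP F p] (C : Submodule F (ι → F)) :
    Submodule F (ι → F) :=
  C ⊓ sGaloisDual p s C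

/-- The matrix-product code `[C_1, …, C_l] A ⊆ F^{t·n}`: codewords are indexed by
`Fin t × Fin n`, with block `j` equal to `∑ u, A u j • c u` for codewords `c u ∈ C u`. -/
def matrixProductCode {F : Type*} [Field F] {n l t : ℕ}
    (C : Fin l → Submodule F (Fin n → F)) (A : Matrix (Fin l) (Fin t) F) :
    Submodule F (Fin t × Fin n → F) where
  carrier := {x | ∃ c : Fin l → Fin n → F, (∀ u, c u ∈ C u) ∧
      ∀ j i, x (j, i) = ∑ u, A u j * c u i}
  add_mem' := by
    rintro x y ⟨c, hc, hx⟩ ⟨c', hc', hy⟩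
    exact ⟨c + c', fun u => (C u).add_mem (hc u) (hc' u), fun j i => by
      simp [hx j i, hy j i, mul_add, Finset.sum_add_distrib]⟩
  zero_mem' := ⟨0, fun u => (C u).zero_mem, fun j i => by simp⟩
  smul_mem' := by
    rintro r x ⟨c, hc, hx⟩
    refine ⟨r • c, fun u => (C u).smul_mem r (hc u), fun j i => ?_⟩
    simp only [Pi.smul_apply, smul_eq_mul, hx j i, Finset.mul_sum]
    exact Finset.sum_congr rfl fun u _ => by ring

/-- `UA A i` : the code in `F^t` spanned by the first `i` rows of the matrix `A`. -/
def UA {F : Type*} [Field F] {l t : ℕ} (A : Matrix (Fin l) (Fin t) F) (i : ℕ) :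
    Submodule F (Fin t → F) :=
  Submodule.span F ((fun u : Fin l => A u) '' {u | (u : ℕ) < i})

/-- The Gabidulin code of dimension `k` associated to `g : Fin m → K`, over a field `K`
containing a subfield with `q` elements: the row span of the matrix `(g j ^ q ^ i)`. -/
def gabidulin {K : Type*} [Field K] (q : ℕ) {m : ℕ} (k : ℕ) (g : Fin m → K) :
    Submodule K (Fin m → K) :=
  Submodule.span K (Set.range fun i : Fin k => fun j => g j ^ q ^ (i : ℕ))

/-!
Write a codeword of `[C_1,…,C_l]A` as the block matrix `Aᵀ * c` with rows `c u ∈ C u`; since `A`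
is invertible, the rows are recovered as `(Aᵀ)⁻¹` times the codeword. Raising
`A · (A^{(p^{m-s})})ᵀ = diag(λ)` entrywise to the `p^s`-th power and using `x^{p^m} = x` gives
`A^{(p^s)} · Aᵀ = diag(λ^{p^s})`, so the `s`-Galois form of two codewords `Aᵀ * e` and `Aᵀ * f`
is `∑ u, λ_u^{p^s} [e_u, f_u]_s`. As every `λ_u` is nonzero, this gives
`([C_1,…,C_l]A)^{⊥_s} = [C_1^{⊥_s},…,C_l^{⊥_s}]A`, and intersecting with `[C_1,…,C_l]A`
row by row gives the hull.
-/

theorem sum_dotProduct_transpose_mul_map {R ι κ ν : Type*} [CommSemiring R] [Fintype ι]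
    [DecidableEq ι] [Fintype κ] [Fintype ν] (φ : R →+* R) {A : Matrix ι κ R} {μ : ι → R}
    (hA : A.map φ * Aᵀ = diagonal μ) (e f : Matrix ι ν R) :
    ∑ j, (Aᵀ * e) j ⬝ᵥ (Aᵀ * f).map φ j = ∑ u, μ u * e u ⬝ᵥ f.map φ u := by
  calc ∑ j, (Aᵀ * e) j ⬝ᵥ (Aᵀ * f).map φ j = trace (Aᵀ * e * ((Aᵀ * f).map φ)ᵀ) := rfl
    _ = trace (A.map φ * Aᵀ * (e * (f.map φ)ᵀ)) := by
      simp only [Matrix.map_mul, transpose_mul, transpose_map, transpose_transpose]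
      rw [← Matrix.mul_assoc, trace_mul_comm]
      simp only [Matrix.mul_assoc]
    _ = ∑ u, μ u * e u ⬝ᵥ f.map φ u := by
      simp only [hA, trace, diag_apply, diagonal_mul]
      rfl

section MatrixProductCode

variable {F : Type*} [Field F] {n l : ℕ}

theorem mem_matrixProductCode_iff_exists {t : ℕ} (C : Fin l → Submodule F (Fin n → F))
    (A : Matrix (Fin l) (Fin t) F) (x : Fin t × Fin n → F) :
    x ∈ matrixProductCode C A ↔
      ∃ c : Matrix (Fin l) (Fin n) F, (∀ u, c u ∈ C u) ∧ of (Function.curry x) = Aᵀ * c := by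
  refine exists_congr fun c => and_congr_right fun _ => ?_
  rw [← Matrix.ext_iff]
  rfl

theorem mem_matrixProductCode_iff {C : Fin l → Submodule F (Fin n → F)}
    {A : Matrix (Fin l) (Fin l) F} (hA : IsUnit A) (x : Fin l × Fin n → F) :
    x ∈ matrixProductCode C A ↔ ∀ u, (Aᵀ⁻¹ * of (Function.curry x)) u ∈ C u := by
  have hdet := isUnit_det_transpose A ((isUnit_iff_isUnit_det A).1 hA)
  rw [mem_matrixProductCode_iff_exists]
  constructor
  · rintro ⟨c, hc, hx⟩
    rwa [hx, nonsing_inv_mul_cancel_left _ _ hdet]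
  · exact fun h => ⟨_, h, (mul_nonsing_inv_cancel_left _ _ hdet).symm⟩

theorem matrixProductCode_inf {A : Matrix (Fin l) (Fin l) F} (hA : IsUnit A)
    (C C' : Fin l → Submodule F (Fin n → F)) :
    matrixProductCode C A ⊓ matrixProductCode C' A =
      matrixProductCode (fun u => C u ⊓ C' u) A := by
  ext x
  simp only [Submodule.mem_inf, mem_matrixProductCode_iff hA, forall_and]

theorem map_pow_mul_transpose_eq_diagonal {p m s : ℕ} [Fact p.Prime] [Fintype F] [CharP F p]
    (hs : s ≤ m) (hcard : Fintype.card F = p ^ m) {ι κ : Type*} [Fintype κ] [DecidableEq ι]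
    {A : Matrix ι κ F} {lam : ι → F}
    (hdiag : A * (A.map fun x => x ^ p ^ (m - s))ᵀ = diagonal lam) :
    A.map (· ^ p ^ s) * Aᵀ = diagonal fun u => lam u ^ p ^ s := by
  have hfrob : ∀ x : F, (x ^ p ^ (m - s)) ^ p ^ s = x := fun x => by
    rw [← pow_mul, ← pow_add, Nat.sub_add_cancel hs, ← hcard, FiniteField.pow_card]
  have h := congrArg (Matrix.map · (iterateFrobenius F p s)) hdiag
  simp only [Matrix.map_mul, ← transpose_map, Matrix.map_map, diagonal_map (map_zero _),
    Function.comp_def, iterateFrobenius_def, hfrob, Matrix.map_id'] at h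
  exact h

theorem sGaloisDual_matrixProductCode {p s : ℕ} [Fact p.Prime] [CharP F p]
    (C : Fin l → Submodule F (Fin n → F)) {A : Matrix (Fin l) (Fin l) F} (hA : IsUnit A)
    {μ : Fin l → F} (hμ : ∀ u, μ u ≠ 0) (hAμ : A.map (· ^ p ^ s) * Aᵀ = diagonal μ) :
    sGaloisDual p s (matrixProductCode C A) =
      matrixProductCode (fun u => sGaloisDual p s (C u)) A := by
  ext x
  set f := Aᵀ⁻¹ * of (Function.curry x)
  have hx : of (Function.curry x) = Aᵀ * f :=
    (mul_nonsing_inv_cancel_left _ _ (isUnit_det_transpose A ((isUnit_iff_isUnit_det A).1 hA))).symm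
  have galoisForm_eq : ∀ c (e : Matrix (Fin l) (Fin n) F), of (Function.curry c) = Aᵀ * e →
      ∑ ji, c ji * x ji ^ p ^ s = ∑ u, μ u * e u ⬝ᵥ f.map (· ^ p ^ s) u := by
    intro c e hc
    calc ∑ ji, c ji * x ji ^ p ^ s
        = ∑ j, (Aᵀ * e) j ⬝ᵥ (Aᵀ * f).map (iterateFrobenius F p s) j := by
          rw [Fintype.sum_prod_type, ← hc, ← hx]
          rfl
      _ = _ := sum_dotProduct_transpose_mul_map _ hAμ e f
  rw [mem_matrixProductCode_iff hA]
  constructor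
  · intro hdual u d hd
    have hsingle : Function.uncurry (Aᵀ * updateRow 0 u d) ∈ matrixProductCode C A := by
      refine (mem_matrixProductCode_iff_exists C A _).2 ⟨updateRow 0 u d, fun v => ?_, rfl⟩
      rcases eq_or_ne v u with rfl | hv
      · rwa [updateRow_self]
      · rw [updateRow_ne hv]
        exact zero_mem _
    have h := hdual _ hsingle
    rw [galoisForm_eq _ _ rfl, Fintype.sum_eq_single u fun v hv => by
      rw [updateRow_ne hv]; exact mul_eq_zero_of_right _ (zero_dotProduct _), updateRow_self] at h
    exact (mul_eq_zero.1 h).resolve_left (hμ u)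
  · intro hdual c hc
    obtain ⟨e, he, hce⟩ := (mem_matrixProductCode_iff_exists C A c).1 hc
    rw [galoisForm_eq c e hce]
    exact sum_eq_zero fun u _ => mul_eq_zero_of_right _ (hdual u (e u) (he u))

end MatrixProductCode

/-- If `A · (A^{(p^{m-s})})ᵀ = diag(λ_1,…,λ_l)` with all `λ_i ≠ 0`, then
`Hull_s([C_1,…,C_l]A) = [Hull_s(C_1),…,Hull_s(C_l)]A`. -/
theorem matrixProduct_galois_hull
    {p m s : ℕ} [Fact p.Prime] (hs : s < m)
    {F : Type*} [Field F] [Fintype F] [CharP F p] (hcard : Fintype.card F = p ^ m)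
    {n l : ℕ} (C : Fin l → Submodule F (Fin n → F))
    (A : Matrix (Fin l) (Fin l) F) (hA : IsUnit A)
    (lam : Fin l → F) (hlam : ∀ u, lam u ≠ 0)
    (hdiag : A * (A.map fun x => x ^ p ^ (m - s))ᵀ = Matrix.diagonal lam) :
    sGaloisHull p s (matrixProductCode C A) =
      matrixProductCode (fun u => sGaloisHull p s (C u)) A := by
  have hdual := sGaloisDual_matrixProductCode C hA (fun u => pow_ne_zero _ (hlam u))
    (map_pow_mul_transpose_eq_diagonal hs.le hcard hdiag)
  rw [sGaloisHull, hdual]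
  exact matrixProductCode_inf hA _ _

end
end

section
/- Let q = p^m with p an odd prime, fix an integer 0 ≤ s < m, and let C_1 and C_2 be linear codes over F_q of length n with parameters [n,k_1,d_1]_q and [n,k_2,d_2]_q respectively (both nonzero). Let A be the 2×2 matrix with rows (1,1) and (1,−1), and let C = [C_1,C_2]A be the matrix-product code. Then C is a linear code over F_q of length 2n and dimension k_1+k_2, its minimum Hamming weight satisfies d(C) ≥ min{2d_1, d_2}, and dim_{F_q} Hull_s(C) = dim_{F_q} Hull_s(C_1) + dim_{F_q} Hull_s(C_2). -/
open Finset Matrix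

noncomputable section

/-! If `A · (A^{(p^s)})ᵀ = diag D` with every `D u ≠ 0`, the `s`-Galois form of two words of
`[C₁, …, C_l] A` splits as `∑ u, D u · [c u, a u]_s`. Testing against words supported on one
block shows that the hull is the image of the product of the hulls, and the rows of `A` are
independent, so dimensions add. For `A = [[1, 1], [1, -1]]` we get `D = (2, 2)`, nonzero because
`p` is odd. The distance bound is the `(u + v | u - v)` estimate: when `c₂ ≠ 0`, the word
`2 c₂ = (c₁ + c₂) - (c₁ - c₂)` has weight at most `wt (c₁ + c₂) + wt (c₁ - c₂)`. -/

open Module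

namespace Submodule

variable {R ι : Type*} [Semiring R] {φ : ι → Type*} [∀ i, AddCommMonoid (φ i)]
  [∀ i, Module R (φ i)]

def piUnivEquiv (W : ∀ i, Submodule R (φ i)) : pi Set.univ W ≃ₗ[R] ∀ i, W i where
  toFun x i := ⟨x.1 i, x.2 i trivial⟩
  invFun y := ⟨fun i => y i, fun i _ => (y i).2⟩
  map_add' _ _ := rfl
  map_smul' _ _ := rfl
  left_inv _ := rfl
  right_inv _ := rfl

theorem finrank_pi_univ {K ι : Type*} [Field K] [Fintype ι] {V : Type*}
    [AddCommGroup V] [Module K V] [FiniteDimensional K V] (W : ι → Submodule K V) :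
    finrank K (pi Set.univ W) = ∑ i, finrank K (W i) :=
  (piUnivEquiv W).finrank_eq.trans (finrank_pi_fintype K)

end Submodule

section Hamming

variable {ι : Type*} [Fintype ι]

theorem hwt_eq_hammingNorm {G : Type*} [Zero G] [DecidableEq G] (x : ι → G) :
    hwt x = hammingNorm x := by
  rw [hwt, hammingNorm, ← Set.ncard_coe_finset]
  congr 1
  ext
  simp

theorem hwt_eq_sum_blocks {G : Type*} [Zero G] {σ : Type*} [Fintype σ] (x : σ × ι → G) :
    hwt x = ∑ j, hwt fun i => x (j, i) := by
  classical
  simp only [hwt_eq_hammingNorm, hammingNorm, Finset.card_filter]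
  exact Fintype.sum_prod_type _

theorem hwt_le_hwt_add_add_hwt_sub {F : Type*} [Field F] (h2 : (2 : F) ≠ 0)
    (u v : ι → F) : hwt v ≤ hwt (u + v) + hwt (u - v) := by
  classical
  have h : (2 : F) • v = -(u - v) + (u + v) := by module
  calc hwt v = hammingNorm ((2 : F) • v) := by
        rw [hammingNorm_smul fun _ => .of_ne_zero h2, hwt_eq_hammingNorm]
    _ = hammingDist (u - v) (u + v) := by rw [h, hammingDist_eq_hammingNorm]
    _ ≤ hammingDist (u - v) 0 + hammingDist 0 (u + v) := hammingDist_triangle _ _ _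
    _ = hwt (u + v) + hwt (u - v) := by
      rw [hammingDist_zero_right, hammingDist_zero_left, hwt_eq_hammingNorm, hwt_eq_hammingNorm,
        add_comm]

end Hamming

theorem Matrix.vecMul_dotProduct_comp_vecMul {R m k : Type*} [CommRing R] [Fintype m]
    [Fintype k] (σ : R →+* R) (A : Matrix m k R) (v w : m → R) :
    v ᵥ* A ⬝ᵥ σ ∘ (w ᵥ* A) = v ⬝ᵥ (A * (A.map σ)ᵀ) *ᵥ (σ ∘ w) := by
  have hσ : σ ∘ (w ᵥ* A) = (A.map σ)ᵀ *ᵥ (σ ∘ w) := by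
    ext j
    rw [Function.comp_apply, RingHom.map_vecMul, mulVec_transpose]
  rw [hσ, dotProduct_mulVec, dotProduct_mulVec, vecMul_vecMul]

theorem Matrix.vecMul_injective_of_mul_eq_diagonal {R m k : Type*} [CommRing R] [IsDomain R]
    [Fintype m] [Fintype k] [DecidableEq m] {A : Matrix m k R} {B : Matrix k m R} {D : m → R}
    (hAB : A * B = diagonal D) (hD : ∀ u, D u ≠ 0) :
    Function.Injective fun v : m → R => v ᵥ* A := by
  intro v w h
  have h' : v ᵥ* diagonal D = w ᵥ* diagonal D := by
    simp only at h
    rw [← hAB, ← vecMul_vecMul, ← vecMul_vecMul, h]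
  funext u
  simpa [vecMul_diagonal, hD u] using congrFun h' u

section MatrixProductCode

variable {F : Type*} [Field F] {n l t : ℕ}

def matrixProductMap (A : Matrix (Fin l) (Fin t) F) :
    (Fin l → Fin n → F) →ₗ[F] (Fin t × Fin n → F) where
  toFun c x := ((fun u => c u x.2) ᵥ* A) x.1
  map_add' _ _ := funext fun x => congrFun (Matrix.add_vecMul A _ _) x.1
  map_smul' r _ := funext fun x => congrFun (Matrix.smul_vecMul r _ A) x.1

theorem matrixProductMap_apply (A : Matrix (Fin l) (Fin t) F) (c : Fin l → Fin n → F)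
    (j : Fin t) (i : Fin n) : matrixProductMap A c (j, i) = ∑ u, A u j * c u i := by
  simp [matrixProductMap, vecMul, dotProduct, mul_comm]

theorem matrixProductCode_eq_map (C : Fin l → Submodule F (Fin n → F))
    (A : Matrix (Fin l) (Fin t) F) :
    matrixProductCode C A = (Submodule.pi Set.univ C).map (matrixProductMap A) := by
  ext x
  simp only [matrixProductCode, Submodule.mem_mk, AddSubmonoid.mem_mk,
    AddSubsemigroup.mem_mk, Set.mem_ofPred_eq, Submodule.mem_map, Submodule.mem_pi]
  constructor
  · rintro ⟨c, hc, hx⟩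
    exact ⟨c, fun u _ => hc u, funext fun ⟨j, i⟩ => by rw [matrixProductMap_apply, hx]⟩
  · rintro ⟨c, hc, rfl⟩
    exact ⟨c, fun u => hc u trivial, matrixProductMap_apply A c⟩

theorem matrixProductMap_injective {A : Matrix (Fin l) (Fin t) F}
    (hA : Function.Injective fun v : Fin l → F => v ᵥ* A) :
    Function.Injective (matrixProductMap (n := n) A) := by
  intro c c' h
  funext u i
  have hrow : (fun u => c u i) ᵥ* A = (fun u => c' u i) ᵥ* A :=
    funext fun j => congrFun h (j, i)
  exact congrFun (hA hrow) u

theorem finrank_map_matrixProductMap {A : Matrix (Fin l) (Fin t) F}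
    (hA : Function.Injective fun v : Fin l → F => v ᵥ* A)
    (W : Fin l → Submodule F (Fin n → F)) :
    finrank F ((Submodule.pi Set.univ W).map (matrixProductMap A)) = ∑ u, finrank F (W u) :=
  (Submodule.equivMapOfInjective _ (matrixProductMap_injective hA) _).finrank_eq.symm.trans
    (Submodule.finrank_pi_univ W)

theorem finrank_matrixProductCode {A : Matrix (Fin l) (Fin t) F}
    (hA : Function.Injective fun v : Fin l → F => v ᵥ* A)
    (C : Fin l → Submodule F (Fin n → F)) :
    finrank F (matrixProductCode C A) = ∑ u, finrank F (C u) := by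
  rw [matrixProductCode_eq_map, finrank_map_matrixProductMap hA]

end MatrixProductCode

section GaloisHull

variable {F : Type*} [Field F] {n l t : ℕ}

def galoisForm (p s : ℕ) {ι : Type*} [Fintype ι] (x y : ι → F) : F :=
  ∑ i, x i * y i ^ p ^ s

variable {p s : ℕ} [Fact p.Prime] [CharP F p]

theorem mem_sGaloisDual_iff {ι : Type*} [Fintype ι] {C : Submodule F (ι → F)} {x : ι → F} :
    x ∈ sGaloisDual p s C ↔ ∀ c ∈ C, galoisForm p s c x = 0 :=
  Iff.rfl

theorem galoisForm_matrixProductMap {A : Matrix (Fin l) (Fin t) F} {D : Fin l → F}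
    (hAD : A * (A.map (iterateFrobenius F p s))ᵀ = diagonal D) (c a : Fin l → Fin n → F) :
    galoisForm p s (matrixProductMap A c) (matrixProductMap A a) =
      ∑ u, D u * galoisForm p s (c u) (a u) := by
  have hcoord : ∀ i, ∑ j, matrixProductMap A c (j, i) * matrixProductMap A a (j, i) ^ p ^ s =
      ∑ u, D u * (c u i * a u i ^ p ^ s) := by
    intro i
    have := vecMul_dotProduct_comp_vecMul (iterateFrobenius F p s) A (fun u => c u i)
      (fun u => a u i)
    rw [hAD] at this
    simpa [dotProduct, mulVec_diagonal, iterateFrobenius_def, matrixProductMap, mul_left_comm]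
      using this
  calc galoisForm p s (matrixProductMap A c) (matrixProductMap A a)
      = ∑ i, ∑ j, matrixProductMap A c (j, i) * matrixProductMap A a (j, i) ^ p ^ s := by
        rw [galoisForm, Fintype.sum_prod_type, Finset.sum_comm]
    _ = ∑ i, ∑ u, D u * (c u i * a u i ^ p ^ s) := Finset.sum_congr rfl fun i _ => hcoord i
    _ = ∑ u, D u * galoisForm p s (c u) (a u) := by
        rw [Finset.sum_comm]
        simp only [galoisForm, Finset.mul_sum]

theorem sGaloisHull_matrixProductCode {A : Matrix (Fin l) (Fin t) F} {D : Fin l → F}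
    (hAD : A * (A.map (iterateFrobenius F p s))ᵀ = diagonal D) (hD : ∀ u, D u ≠ 0)
    (C : Fin l → Submodule F (Fin n → F)) :
    sGaloisHull p s (matrixProductCode C A) =
      (Submodule.pi Set.univ fun u => sGaloisHull p s (C u)).map (matrixProductMap A) := by
  ext x
  rw [sGaloisHull, matrixProductCode_eq_map]
  simp only [Submodule.mem_inf, Submodule.mem_map, Submodule.mem_pi, Set.mem_univ, true_implies]
  constructor
  · rintro ⟨⟨c, hc, rfl⟩, hdual⟩
    rw [mem_sGaloisDual_iff] at hdual
    refine ⟨c, fun u => ⟨hc u, fun a ha => ?_⟩, rfl⟩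
    have hsingle := hdual _ ⟨Pi.single u a, Submodule.le_comap_single_pi C ha, rfl⟩
    rw [galoisForm_matrixProductMap hAD, Fintype.sum_eq_single u] at hsingle
    · simpa [galoisForm, hD u] using hsingle
    · intro v hv
      simp [hv, galoisForm]
  · rintro ⟨c, hc, rfl⟩
    refine ⟨⟨c, fun u => (hc u).1, rfl⟩, ?_⟩
    rw [mem_sGaloisDual_iff]
    rintro _ ⟨a, ha, rfl⟩
    rw [galoisForm_matrixProductMap hAD]
    exact Finset.sum_eq_zero fun u _ => mul_eq_zero_of_right _ ((hc u).2 (a u) (ha u trivial))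

theorem finrank_sGaloisHull_matrixProductCode {A : Matrix (Fin l) (Fin t) F} {D : Fin l → F}
    (hAD : A * (A.map (iterateFrobenius F p s))ᵀ = diagonal D) (hD : ∀ u, D u ≠ 0)
    (C : Fin l → Submodule F (Fin n → F)) :
    finrank F (sGaloisHull p s (matrixProductCode C A)) =
      ∑ u, finrank F (sGaloisHull p s (C u)) := by
  rw [sGaloisHull_matrixProductCode hAD hD,
    finrank_map_matrixProductMap (vecMul_injective_of_mul_eq_diagonal hAD hD)]

end GaloisHull

section SumDifference

variable {F : Type*} [Field F]

theorem min_le_hwt_add_add_hwt_sub {ι : Type*} [Fintype ι] (h2 : (2 : F) ≠ 0) {d₁ d₂ : ℕ}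
    {c₁ c₂ : ι → F} (hd₁ : c₁ ≠ 0 → d₁ ≤ hwt c₁) (hd₂ : c₂ ≠ 0 → d₂ ≤ hwt c₂)
    (hc : c₁ ≠ 0 ∨ c₂ ≠ 0) : min (2 * d₁) d₂ ≤ hwt (c₁ + c₂) + hwt (c₁ - c₂) := by
  by_cases hc₂ : c₂ = 0
  · subst hc₂
    have := hd₁ (hc.resolve_right (not_not.mpr rfl))
    simp only [add_zero, sub_zero]
    omega
  · exact (min_le_right _ _).trans ((hd₂ hc₂).trans (hwt_le_hwt_add_add_hwt_sub h2 c₁ c₂))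

variable {n : ℕ}

theorem hwt_matrixProductMap_sumDiff (c : Fin 2 → Fin n → F) :
    hwt (matrixProductMap !![(1 : F), 1; 1, -1] c) = hwt (c 0 + c 1) + hwt (c 0 - c 1) := by
  rw [hwt_eq_sum_blocks, Fin.sum_univ_two]
  congr 2 <;> funext i <;> simp [matrixProductMap_apply, Fin.sum_univ_two, sub_eq_add_neg]

theorem sumDiff_mul_map_transpose (σ : F →+* F) :
    !![(1 : F), 1; 1, -1] * (!![(1 : F), 1; 1, -1].map σ)ᵀ = diagonal ![2, 2] := by
  ext i j
  fin_cases i <;> fin_cases j <;> simp [Matrix.mul_apply, Fin.sum_univ_two] <;> norm_num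

end SumDifference

theorem two_block_matrixProduct_general
    {p s : ℕ} [Fact p.Prime] (hodd : Odd p)
    {F : Type*} [Field F] [CharP F p]
    {n k₁ k₂ d₁ d₂ : ℕ} (C₁ C₂ : Submodule F (Fin n → F))
    (hk₁ : Module.finrank F C₁ = k₁) (hd₁ : minHWt C₁ d₁)
    (hk₂ : Module.finrank F C₂ = k₂) (hd₂ : minHWt C₂ d₂) :
    Module.finrank F (matrixProductCode ![C₁, C₂] !![(1 : F), 1; 1, -1]) = k₁ + k₂ ∧
    (∀ c ∈ matrixProductCode ![C₁, C₂] !![(1 : F), 1; 1, -1], c ≠ 0 →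
      min (2 * d₁) d₂ ≤ hwt c) ∧
    Module.finrank F (sGaloisHull p s (matrixProductCode ![C₁, C₂] !![(1 : F), 1; 1, -1])) =
      Module.finrank F (sGaloisHull p s C₁) + Module.finrank F (sGaloisHull p s C₂) := by
  have h2 : (2 : F) ≠ 0 :=
    Ring.two_ne_zero (by rw [ringChar.eq F p]; exact hodd.ne_two_of_dvd_nat dvd_rfl)
  have hAD := sumDiff_mul_map_transpose (iterateFrobenius F p s)
  have hD : ∀ u, ![(2 : F), 2] u ≠ 0 := fun u => by fin_cases u <;> exact h2
  refine ⟨?_, ?_, ?_⟩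
  · rw [finrank_matrixProductCode (vecMul_injective_of_mul_eq_diagonal hAD hD),
      Fin.sum_univ_two, ← hk₁, ← hk₂]
    rfl
  · rintro _ hc hc0
    rw [matrixProductCode_eq_map] at hc
    obtain ⟨c, hc, rfl⟩ := hc
    rw [hwt_matrixProductMap_sumDiff]
    refine min_le_hwt_add_add_hwt_sub h2 (hd₁.2 _ (hc 0 trivial)) (hd₂.2 _ (hc 1 trivial)) ?_
    contrapose! hc0
    rw [show c = 0 from funext fun u => by fin_cases u <;> simp [hc0.1, hc0.2], map_zero]
  · rw [finrank_sGaloisHull_matrixProductCode hAD hD, Fin.sum_univ_two]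
    rfl

/-- For `p` an odd prime and `A = [[1,1],[1,-1]]`, the matrix-product code
`C = [C₁,C₂]A` has length `2n`, dimension `k₁+k₂`, `d(C) ≥ min{2d₁, d₂}`, and
`dim Hull_s(C) = dim Hull_s(C₁) + dim Hull_s(C₂)`. -/
theorem two_block_matrixProduct
    {p m s : ℕ} [Fact p.Prime] (hodd : Odd p) (hs : s < m)
    {F : Type*} [Field F] [Fintype F] [CharP F p] (hcard : Fintype.card F = p ^ m)
    {n k₁ k₂ d₁ d₂ : ℕ} (C₁ C₂ : Submodule F (Fin n → F))
    (hk₁ : Module.finrank F C₁ = k₁) (hd₁ : minHWt C₁ d₁)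
    (hk₂ : Module.finrank F C₂ = k₂) (hd₂ : minHWt C₂ d₂) :
    Module.finrank F (matrixProductCode ![C₁, C₂] !![(1 : F), 1; 1, -1]) = k₁ + k₂ ∧
    (∀ c ∈ matrixProductCode ![C₁, C₂] !![(1 : F), 1; 1, -1], c ≠ 0 →
      min (2 * d₁) d₂ ≤ hwt c) ∧
    Module.finrank F (sGaloisHull p s (matrixProductCode ![C₁, C₂] !![(1 : F), 1; 1, -1])) =
      Module.finrank F (sGaloisHull p s C₁) + Module.finrank F (sGaloisHull p s C₂) :=
  two_block_matrixProduct_general hodd C₁ C₂ hk₁ hd₁ hk₂ hd₂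

end
end
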